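/- Let γ ∈ Sⁿ⁻¹ with γₙ ≠ 0 and define for 1 ≤ i ≤ n−1 the 𝔰𝔬(n)-valued functions X_i(g) = γ ∧ (e_i − (γ_i/γₙ) eₙ) on {g ∈ SO(n) : (g⁻¹eₙ)ₙ ≠ 0}, γ = g⁻¹eₙ. Then their Lie bracket (as vector fields on SO(n) in the left trivialization) is [X_i, X_j](g) = (e_i − (γ_i/γₙ) eₙ) ∧ (e_j − (γ_j/γₙ) eₙ). -/

import Mathlib

open Matrix BigOperators

noncomputable section

/-- `u ∧ v := u vᵀ − v uᵀ ∈ 𝔰𝔬(N)`. -/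
def wedgeVec {N : ℕ} (u v : Fin N → ℝ) : Matrix (Fin N) (Fin N) ℝ :=
  Matrix.of fun i j => u i * v j - v i * u j

/-- The Lie bracket of vector fields on `SO(N)` in the left trivialization
`T_g SO(N) ≅ 𝔰𝔬(N)`:
`[Y,Z](g) = dZ_g(gY(g)) − dY_g(gZ(g)) + [Y(g),Z(g)]`, where directional
derivatives are computed entrywise along the curves `t ↦ g exp(t Y(g))`. -/
def bracketLT {N : ℕ}
    (Y Z : Matrix (Fin N) (Fin N) ℝ → Matrix (Fin N) (Fin N) ℝ)
    (g : Matrix (Fin N) (Fin N) ℝ) : Matrix (Fin N) (Fin N) ℝ :=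
  Matrix.of fun k l =>
    deriv (fun t : ℝ => Z (g * NormedSpace.exp (t • Y g)) k l) 0
      - deriv (fun t : ℝ => Y (g * NormedSpace.exp (t • Z g)) k l) 0
      + (Y g * Z g - Z g * Y g) k l

/-- `γ(h) = h⁻¹ e_last` for `h ∈ SO(n+1)`, i.e. `γ_k = h_{last,k}`. -/
def γfun {n : ℕ} (h : Matrix (Fin (n + 1)) (Fin (n + 1)) ℝ) : Fin (n + 1) → ℝ :=
  fun m => h (Fin.last n) m

/-- `w_i(h) = e_i − (γ_i/γ_last) e_last` for `1 ≤ i ≤ n−1`. -/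
def wfun {n : ℕ} (i : Fin n) (h : Matrix (Fin (n + 1)) (Fin (n + 1)) ℝ) :
    Fin (n + 1) → ℝ :=
  (Pi.single (Fin.castSucc i) 1 : Fin (n + 1) → ℝ) -
    (γfun h (Fin.castSucc i) / γfun h (Fin.last n)) • (Pi.single (Fin.last n) 1 : Fin (n + 1) → ℝ)

/-! Along the curve `t ↦ g exp(t X_i(g))` the row `γ = g_{last,·}` moves with velocity
`γ X_i(g) = |γ|² w_i − ⟨γ, w_i⟩ γ = w_i`, so by the product and quotient rules the derivative
of `X_j = γ ∧ w_j` is `w_i ∧ w_j − q_{ij} γ ∧ e_last`, where `q_{ij}` is the derivative of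
`γ_j / γ_last`. This coefficient is symmetric in `i, j`, so these terms cancel in the bracket,
and the matrix commutator `[γ ∧ w_i, γ ∧ w_j] = w_j ∧ w_i` (as `γ` is a unit vector orthogonal to
both `w_i` and `w_j`) cancels the second derivative term. -/

section Wedge

variable {N : ℕ}

theorem vecMul_wedgeVec (u v w : Fin N → ℝ) :
    w ᵥ* wedgeVec u v = (w ⬝ᵥ u) • v - (w ⬝ᵥ v) • u := by
  ext m
  simp only [vecMul, dotProduct, wedgeVec, of_apply, Pi.sub_apply, Pi.smul_apply, smul_eq_mul,
    Finset.sum_mul, ← Finset.sum_sub_distrib]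
  exact Finset.sum_congr rfl fun x _ => by ring

theorem wedgeVec_commutator {u v w : Fin N → ℝ} (huu : u ⬝ᵥ u = 1) (huv : u ⬝ᵥ v = 0)
    (huw : u ⬝ᵥ w = 0) :
    wedgeVec u v * wedgeVec u w - wedgeVec u w * wedgeVec u v = wedgeVec w v := by
  ext k l
  have hterm : ∀ x, wedgeVec u v k x * wedgeVec u w x l - wedgeVec u w k x * wedgeVec u v x l =
      (w k * v l - v k * w l) * (u x * u x) + (u k * w l - w k * u l) * (u x * v x)
        - (u k * v l - v k * u l) * (u x * w x) := fun x => by simp only [wedgeVec, of_apply]; ring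
  simp only [dotProduct] at huu huv huw
  rw [Matrix.sub_apply, mul_apply, mul_apply, ← Finset.sum_sub_distrib, Finset.sum_congr rfl
    fun x _ => hterm x, Finset.sum_sub_distrib, Finset.sum_add_distrib, ← Finset.mul_sum,
    ← Finset.mul_sum, ← Finset.mul_sum, huu, huv, huw]
  simp only [wedgeVec, of_apply]
  ring

theorem HasDerivAt.wedgeVec_apply {u v : ℝ → Fin N → ℝ} {u' v' : Fin N → ℝ} {t : ℝ}
    (hu : HasDerivAt u u' t) (hv : HasDerivAt v v' t) (k l : Fin N) :
    HasDerivAt (fun s => wedgeVec (u s) (v s) k l)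
      ((wedgeVec u' (v t) + wedgeVec (u t) v') k l) t := by
  rw [hasDerivAt_pi] at hu hv
  refine (((hu k).mul (hv l)).sub ((hv k).mul (hu l))).congr_deriv ?_
  simp only [wedgeVec, Matrix.add_apply, of_apply]
  ring

end Wedge

theorem hasDerivAt_mul_exp_smul_apply {ι : Type*} [Fintype ι] [DecidableEq ι]
    (g M : Matrix ι ι ℝ) (k m : ι) :
    HasDerivAt (fun t : ℝ => (g * NormedSpace.exp (t • M)) k m) ((g * M) k m) 0 := by
  let _ : NormedRing (Matrix ι ι ℝ) := Matrix.linftyOpNormedRing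
  let _ : NormedAlgebra ℝ (Matrix ι ι ℝ) := Matrix.linftyOpNormedAlgebra
  have hexp : HasDerivAt (fun t : ℝ => NormedSpace.exp (t • M)) M 0 := by
    have h := hasDerivAt_exp_smul_const M (0 : ℝ)
    rwa [zero_smul, NormedSpace.exp_zero, one_mul] at h
  exact ((entryLinearMap ℝ ℝ k m ∘ₗ LinearMap.mulLeft ℝ g).toContinuousLinearMap.hasFDerivAt
    ).comp_hasDerivAt 0 hexp

section Gamma

variable {n : ℕ} (g : Matrix (Fin (n + 1)) (Fin (n + 1)) ℝ)

theorem wfun_castSucc (i j : Fin n) : wfun i g j.castSucc = if j = i then 1 else 0 := by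
  simp [wfun, Pi.single_apply, (Fin.castSucc_lt_last j).ne]

theorem wfun_last (i : Fin n) :
    wfun i g (Fin.last n) = -(γfun g i.castSucc / γfun g (Fin.last n)) := by
  simp [wfun, (Fin.castSucc_lt_last i).ne']

theorem γfun_dotProduct_self (hO : g * gᵀ = 1) : γfun g ⬝ᵥ γfun g = 1 := by
  simpa [mul_apply, dotProduct, γfun] using congr_fun₂ hO (Fin.last n) (Fin.last n)

theorem γfun_dotProduct_wfun (i : Fin n) (hγn : γfun g (Fin.last n) ≠ 0) :
    γfun g ⬝ᵥ wfun i g = 0 := by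
  simp only [wfun, dotProduct_sub, dotProduct_smul, dotProduct_single, smul_eq_mul]
  field_simp
  ring

theorem hasDerivAt_γfun_mul_exp (M : Matrix (Fin (n + 1)) (Fin (n + 1)) ℝ) :
    HasDerivAt (fun t : ℝ => γfun (g * NormedSpace.exp (t • M))) (γfun g ᵥ* M) 0 :=
  hasDerivAt_pi.2 fun m => hasDerivAt_mul_exp_smul_apply g M (Fin.last n) m

theorem hasDerivAt_γfun_along_wedge (i : Fin n) (hO : g * gᵀ = 1)
    (hγn : γfun g (Fin.last n) ≠ 0) :
    HasDerivAt (fun t : ℝ => γfun (g * NormedSpace.exp (t • wedgeVec (γfun g) (wfun i g))))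
      (wfun i g) 0 := by
  simpa [vecMul_wedgeVec, γfun_dotProduct_self g hO, γfun_dotProduct_wfun g i hγn] using
    hasDerivAt_γfun_mul_exp g (wedgeVec (γfun g) (wfun i g))

theorem HasDerivAt.wfun {c : ℝ → Matrix (Fin (n + 1)) (Fin (n + 1)) ℝ} {γ' : Fin (n + 1) → ℝ}
    {t : ℝ} (hγ : HasDerivAt (fun s => γfun (c s)) γ' t) (hγn : γfun (c t) (Fin.last n) ≠ 0)
    (j : Fin n) :
    HasDerivAt (fun s => wfun j (c s))
      (-(((γ' j.castSucc * γfun (c t) (Fin.last n) - γfun (c t) j.castSucc * γ' (Fin.last n))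
        / γfun (c t) (Fin.last n) ^ 2) • Pi.single (Fin.last n) 1)) t := by
  rw [hasDerivAt_pi] at hγ
  exact ((hγ j.castSucc).div (hγ (Fin.last n)) hγn).smul_const
    (Pi.single (Fin.last n) 1 : Fin (n + 1) → ℝ) |>.const_sub (Pi.single j.castSucc 1)

/-- The derivative of `γ_j / γ_last` along `X_i` (quotient rule, with `γ' = w_i`). -/
def lastRatioDeriv (i j : Fin n) : ℝ :=
  (wfun i g j.castSucc * γfun g (Fin.last n) - γfun g j.castSucc * wfun i g (Fin.last n))
    / γfun g (Fin.last n) ^ 2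

theorem lastRatioDeriv_comm (i j : Fin n) (hγn : γfun g (Fin.last n) ≠ 0) :
    lastRatioDeriv g i j = lastRatioDeriv g j i := by
  simp only [lastRatioDeriv, wfun_castSucc, wfun_last, eq_comm (a := i)]
  field_simp

theorem hasDerivAt_wedgeVec_along_wedge (i j : Fin n) (hO : g * gᵀ = 1)
    (hγn : γfun g (Fin.last n) ≠ 0) (k l : Fin (n + 1)) :
    HasDerivAt (fun t : ℝ =>
        wedgeVec (γfun (g * NormedSpace.exp (t • wedgeVec (γfun g) (wfun i g))))
          (wfun j (g * NormedSpace.exp (t • wedgeVec (γfun g) (wfun i g)))) k l)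
      ((wedgeVec (wfun i g) (wfun j g)
        - lastRatioDeriv g i j • wedgeVec (γfun g) (Pi.single (Fin.last n) 1)) k l) 0 := by
  have hγ := hasDerivAt_γfun_along_wedge g i hO hγn
  have hg : g * NormedSpace.exp ((0 : ℝ) • wedgeVec (γfun g) (wfun i g)) = g := by
    rw [zero_smul, NormedSpace.exp_zero, mul_one]
  have hw := hγ.wfun (by rwa [hg]) j
  rw [hg] at hw
  refine (hγ.wedgeVec_apply hw k l).congr_deriv ?_
  simp only [hg]
  simp only [wedgeVec, lastRatioDeriv, Matrix.add_apply, Matrix.sub_apply, Matrix.smul_apply,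
    of_apply, Pi.neg_apply, Pi.smul_apply, smul_eq_mul]
  ring

end Gamma

theorem stmt18_general {n : ℕ} (i j : Fin n)
    (g : Matrix (Fin (n + 1)) (Fin (n + 1)) ℝ)
    (hO : g * g.transpose = 1)
    (hγn : γfun g (Fin.last n) ≠ 0) :
    bracketLT (fun h => wedgeVec (γfun h) (wfun i h))
        (fun h => wedgeVec (γfun h) (wfun j h)) g =
      wedgeVec (wfun i g) (wfun j g) := by
  ext k l
  rw [bracketLT, of_apply, (hasDerivAt_wedgeVec_along_wedge g i j hO hγn k l).deriv,
    (hasDerivAt_wedgeVec_along_wedge g j i hO hγn k l).deriv,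
    wedgeVec_commutator (γfun_dotProduct_self g hO) (γfun_dotProduct_wfun g i hγn)
      (γfun_dotProduct_wfun g j hγn), lastRatioDeriv_comm g j i hγn,
    ← Matrix.sub_apply, ← Matrix.add_apply, sub_sub_sub_cancel_right, sub_add_cancel]

/-- For `g ∈ SO(n+1)` with `γ_last ≠ 0`, the vector fields
`X_i(h) = γ(h) ∧ (e_i − (γ_i/γ_last) e_last)` satisfy
`[X_i, X_j](g) = (e_i − (γ_i/γ_last) e_last) ∧ (e_j − (γ_j/γ_last) e_last)`. -/
theorem stmt18 {n : ℕ} (i j : Fin n)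
    (g : Matrix (Fin (n + 1)) (Fin (n + 1)) ℝ)
    (hO : g * g.transpose = 1) (hdet : g.det = 1)
    (hγn : γfun g (Fin.last n) ≠ 0) :
    bracketLT (fun h => wedgeVec (γfun h) (wfun i h))
        (fun h => wedgeVec (γfun h) (wfun j h)) g =
      wedgeVec (wfun i g) (wfun j g) :=
  stmt18_general i j g hO hγn
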